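/- Let Q = Q(C) be a covering polyhedron with vertex set {β_1,...,β_r} and let SC(Q) = {x ∈ ℝ^{s+1} : x ≥ 0, ⟨x, (c_i, -1)⟩ ≥ 0 for all columns c_i of C} be its Simis cone. Then SC(Q) equals the cone generated by {e_1,...,e_s, (β_1,1),...,(β_r,1)}, where e_1,...,e_s are unit vectors of ℝ^{s+1}. -/

import Mathlib

noncomputable section

/-- The covering polyhedron `Q(C) ⊆ ℝ^s` of the matrix `C`. -/
def CPset {s m : ℕ} (C : Matrix (Fin s) (Fin m) ℚ) : Set (Fin s → ℝ) :=
  {x | (∀ i, 0 ≤ x i) ∧ ∀ j, (1 : ℝ) ≤ ∑ i, x i * (C i j : ℝ)}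

/-- The Simis cone `SC(Q) = {x ∈ ℝ^{s+1} : x ≥ 0, ⟨x,(c_i,-1)⟩ ≥ 0 ∀ i}`, with
`ℝ^{s+1}` encoded as `(Fin s → ℝ) × ℝ`. -/
def SCset {s m : ℕ} (C : Matrix (Fin s) (Fin m) ℚ) : Set ((Fin s → ℝ) × ℝ) :=
  {x | (∀ i, 0 ≤ x.1 i) ∧ 0 ≤ x.2 ∧ ∀ j, x.2 ≤ ∑ i, x.1 i * (C i j : ℝ)}

/-!
A point `(y, t)` of the Simis cone with `t > 0` rescales to `t⁻¹ • y ∈ Q(C)`, and one with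
`t = 0` is just a point `y ≥ 0`; so the theorem reduces to the Minkowski decomposition
`Q(C) = ℝ_+^s + conv(β_1, …, β_r)`. This holds for every polyhedron `{y | b_k ≤ f_k y}`
without lines, by induction on the number of constraints that are not tight at `y`: if the
tight constraints determine `y`, it is a vertex; otherwise move from `y` along a nonzero
direction in their kernel until a new constraint becomes tight. If that happens in both
directions, `y` is a convex combination of the two endpoints; if only in one, `y` is that
endpoint plus a recession direction.
-/

open Pointwise

namespace Polyhedron

variable {E ι : Type*} [AddCommGroup E] [Module ℝ E]
  (f : ι → E →ₗ[ℝ] ℝ) (b : ι → ℝ)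

def polyhedron : Set E := {y | ∀ k, b k ≤ f k y}

def recessionCone : Set E := {d | ∀ k, 0 ≤ f k d}

def looseConstraints [Fintype ι] (y : E) : Finset ι := {k | f k y ≠ b k}

variable {f b}

theorem mem_looseConstraints [Fintype ι] {y : E} {k : ι} :
    k ∈ looseConstraints f b y ↔ f k y ≠ b k := by
  simp [looseConstraints]

theorem convex_recessionCone : Convex ℝ (recessionCone f) := by
  intro x hx y hy a c ha hc _ k
  simp only [map_add, map_smul, smul_eq_mul]
  have := hx k; have := hy k
  positivity

theorem add_mem_recessionCone {d e : E} (hd : d ∈ recessionCone f) (he : e ∈ recessionCone f) :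
    d + e ∈ recessionCone f := fun k => by
  rw [map_add]; exact add_nonneg (hd k) (he k)

theorem zero_mem_recessionCone : (0 : E) ∈ recessionCone f := fun k => by simp

theorem mem_extremePoints_of_forall_tight_eq_zero {y : E} (hy : y ∈ polyhedron f b)
    (hrigid : ∀ d, (∀ k, f k y = b k → f k d = 0) → d = 0) :
    y ∈ (polyhedron f b).extremePoints ℝ := by
  refine ⟨hy, fun x₁ hx₁ x₂ hx₂ ⟨a, c, ha, hc, hac, hseg⟩ => ?_⟩
  refine sub_eq_zero.1 (hrigid (x₁ - y) fun k hk => ?_)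
  have hval : a * f k x₁ + c * f k x₂ = b k := by
    rw [← hk, ← hseg, map_add, map_smul, map_smul, smul_eq_mul, smul_eq_mul]
  have h₁ := hx₁ k
  have h₂ := hx₂ k
  have hsum : a * (f k x₁ - b k) + c * (f k x₂ - b k) = 0 := by
    linear_combination hval - b k * hac
  have : f k x₁ = b k := by
    have h := ((add_eq_zero_iff_of_nonneg (mul_nonneg ha.le (sub_nonneg.2 h₁))
      (mul_nonneg hc.le (sub_nonneg.2 h₂))).1 hsum).1
    exact sub_eq_zero.1 ((mul_eq_zero.1 h).resolve_left ha.ne')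
  rw [map_sub, this, hk, sub_self]

theorem exists_pos_add_smul_mem_polyhedron_looseConstraints_ssubset [Fintype ι] {y d : E}
    (hy : y ∈ polyhedron f b) (hd : ∀ k, f k y = b k → f k d = 0) {k₀ : ι} (hk₀ : f k₀ d < 0) :
    ∃ t : ℝ, 0 < t ∧ y + t • d ∈ polyhedron f b ∧
      looseConstraints f b (y + t • d) ⊂ looseConstraints f b y := by
  classical
  have hval : ∀ (t : ℝ) k, f k (y + t • d) = f k y + t * f k d := fun t k => by simp
  have hloose : ∀ k, f k d < 0 → b k < f k y := fun k hk =>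
    (hy k).lt_of_ne fun h => hk.ne (hd k h.symm)
  set D : Finset ι := {k | f k d < 0}
  obtain ⟨k₁, hk₁, hmin⟩ := D.exists_min_image (fun k => (f k y - b k) / -f k d)
    ⟨k₀, by simpa [D] using hk₀⟩
  simp only [D, Finset.mem_filter, Finset.mem_univ, true_and] at hk₁ hmin
  set t := (f k₁ y - b k₁) / -f k₁ d
  have ht : 0 < t := div_pos (by linarith [hloose k₁ hk₁]) (by linarith)
  have hk₁_tight : f k₁ (y + t • d) = b k₁ := by
    have : t * -f k₁ d = f k₁ y - b k₁ := div_mul_cancel₀ _ (neg_ne_zero.2 hk₁.ne)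
    rw [hval]; linarith
  refine ⟨t, ht, fun k => ?_, ?_⟩
  · rw [hval]
    rcases le_or_gt 0 (f k d) with h | h
    · linarith [hy k, mul_nonneg ht.le h]
    · have := (le_div_iff₀ (by linarith)).1 (hmin k h)
      linarith
  · have hsub : looseConstraints f b (y + t • d) ⊆ looseConstraints f b y := fun k hk =>
      mem_looseConstraints.2 fun h =>
        mem_looseConstraints.1 hk (by rw [hval, hd k h, h, mul_zero, add_zero])
    exact (Finset.ssubset_iff_of_subset hsub).2 ⟨k₁, mem_looseConstraints.2 (hloose k₁ hk₁).ne',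
      fun h => mem_looseConstraints.1 h hk₁_tight⟩

theorem exists_tight_direction_decreasing {y d : E}
    (hpointed : ∀ d, (∀ k, f k d = 0) → d = 0) (hd : ∀ k, f k y = b k → f k d = 0)
    (hd0 : d ≠ 0) :
    ∃ e, (∀ k, f k y = b k → f k e = 0) ∧ ∃ k, f k e < 0 := by
  obtain ⟨k, hk⟩ : ∃ k, f k d ≠ 0 := by
    by_contra! h
    exact hd0 (hpointed d h)
  rcases hk.lt_or_gt with hk | hk
  · exact ⟨d, hd, k, hk⟩
  · exact ⟨-d, fun k hk => by rw [map_neg, hd k hk, neg_zero], k, by rwa [map_neg, neg_lt_zero]⟩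

theorem polyhedron_subset_convexHull_extremePoints_add_recessionCone [Fintype ι]
    (hpointed : ∀ d, (∀ k, f k d = 0) → d = 0) :
    polyhedron f b ⊆ convexHull ℝ ((polyhedron f b).extremePoints ℝ) + recessionCone f := by
  set S := convexHull ℝ ((polyhedron f b).extremePoints ℝ) + recessionCone f
  have hS : Convex ℝ S := (convex_convexHull ℝ _).add convex_recessionCone
  intro y hy
  induction hn : (looseConstraints f b y).card using Nat.strong_induction_on generalizing y with
  | _ n ih =>
  by_cases hrigid : ∀ d, (∀ k, f k y = b k → f k d = 0) → d = 0
  · exact ⟨y, subset_convexHull ℝ _ (mem_extremePoints_of_forall_tight_eq_zero hy hrigid),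
      0, zero_mem_recessionCone, add_zero y⟩
  push Not at hrigid
  obtain ⟨d, hd, hd0⟩ := hrigid
  obtain ⟨e, he, k, hk⟩ := exists_tight_direction_decreasing hpointed hd hd0
  have mem_S {z} (hz : z ∈ polyhedron f b)
      (hlt : looseConstraints f b z ⊂ looseConstraints f b y) : z ∈ S :=
    ih _ (hn ▸ Finset.card_lt_card hlt) hz rfl
  obtain ⟨t, ht, hyt, hlt⟩ :=
    exists_pos_add_smul_mem_polyhedron_looseConstraints_ssubset hy he hk
  by_cases hrec : -e ∈ recessionCone f
  · obtain ⟨v, hv, r, hr, hvr⟩ := Set.mem_add.1 (mem_S hyt hlt)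
    refine Set.mem_add.2 ⟨v, hv, r + t • -e, add_mem_recessionCone hr fun k => ?_, ?_⟩
    · rw [map_smul, smul_eq_mul]; exact mul_nonneg ht.le (hrec k)
    · linear_combination (norm := module) hvr
  · obtain ⟨k', hk'⟩ : ∃ k, f k (-e) < 0 := by
      simpa [recessionCone] using hrec
    obtain ⟨t', ht', hyt', hlt'⟩ := exists_pos_add_smul_mem_polyhedron_looseConstraints_ssubset hy
      (fun k hk => by rw [map_neg, he k hk, neg_zero]) hk'
    -- `y` divides the segment from `y + t • e` to `y - t' • e` in the ratio `t : t'`.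
    have htt' : t + t' ≠ 0 := (add_pos ht ht').ne'
    have hsum : t' / (t + t') + t / (t + t') = 1 := by field_simp; ring
    convert hS (mem_S hyt hlt) (mem_S hyt' hlt') (div_pos ht' (add_pos ht ht')).le
      (div_pos ht (add_pos ht ht')).le hsum using 1
    linear_combination (norm := module) -hsum • y

end Polyhedron

theorem convexHull_range_subset_image_stdSimplex {𝕜 ι E : Type*} [Field 𝕜] [LinearOrder 𝕜]
    [IsStrictOrderedRing 𝕜] [Fintype ι] [AddCommGroup E] [Module 𝕜 E] (v : ι → E) :
    convexHull 𝕜 (Set.range v) ⊆ Fintype.linearCombination 𝕜 v '' stdSimplex 𝕜 ι := by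
  classical
  refine convexHull_min (Set.range_subset_iff.2 fun i => ?_)
    ((convex_stdSimplex 𝕜 ι).linear_image _)
  exact ⟨Pi.single i 1, single_mem_stdSimplex 𝕜 i, by simp⟩

section CoveringPolyhedron

open Polyhedron

variable {s m r : ℕ}

def colForm (C : Matrix (Fin s) (Fin m) ℚ) (j : Fin m) : (Fin s → ℝ) →ₗ[ℝ] ℝ :=
  LinearMap.proj j ∘ₗ (C.map ((↑) : ℚ → ℝ)).vecMulLinear

theorem colForm_apply (C : Matrix (Fin s) (Fin m) ℚ) (j : Fin m) (x : Fin s → ℝ) :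
    colForm C j x = ∑ i, x i * (C i j : ℝ) := rfl

def coveringForms (C : Matrix (Fin s) (Fin m) ℚ) : Fin s ⊕ Fin m → (Fin s → ℝ) →ₗ[ℝ] ℝ :=
  Sum.elim LinearMap.proj (colForm C)

theorem CPset_eq_polyhedron (C : Matrix (Fin s) (Fin m) ℚ) :
    CPset C = polyhedron (coveringForms C) (Sum.elim 0 1) := by
  ext x
  simp [CPset, polyhedron, Sum.forall, coveringForms, colForm_apply]

theorem exists_nonneg_add_stdSimplex_combination_of_mem_CPset {C : Matrix (Fin s) (Fin m) ℚ}
    {β : Fin r → Fin s → ℝ} (hvert : Set.extremePoints ℝ (CPset C) = Set.range β)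
    {y : Fin s → ℝ} (hy : y ∈ CPset C) :
    ∃ c w, (∀ i, 0 ≤ c i) ∧ w ∈ stdSimplex ℝ (Fin r) ∧ y = c + ∑ k, w k • β k := by
  rw [CPset_eq_polyhedron] at hy hvert
  have hpointed (d : Fin s → ℝ) (hd : ∀ k, coveringForms C k d = 0) : d = 0 :=
    funext fun i => hd (.inl i)
  obtain ⟨v, hv, c, hc, rfl⟩ :=
    Set.mem_add.1 (polyhedron_subset_convexHull_extremePoints_add_recessionCone hpointed hy)
  rw [hvert] at hv
  obtain ⟨w, hw, rfl⟩ := convexHull_range_subset_image_stdSimplex β hv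
  exact ⟨c, w, fun i => hc (.inl i), hw, add_comm _ _⟩

theorem inv_smul_mem_CPset_of_mem_SCset {C : Matrix (Fin s) (Fin m) ℚ}
    {x : (Fin s → ℝ) × ℝ} (hx : x ∈ SCset C) (hx₂ : 0 < x.2) : x.2⁻¹ • x.1 ∈ CPset C := by
  refine ⟨fun i => mul_nonneg (inv_nonneg.2 hx₂.le) (hx.1 i), fun j => ?_⟩
  rw [← colForm_apply, map_smul, smul_eq_mul, ← inv_mul_cancel₀ hx₂.ne']
  exact mul_le_mul_of_nonneg_left (hx.2.2 j) (inv_nonneg.2 hx₂.le)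

theorem add_sum_smul_mem_SCset {C : Matrix (Fin s) (Fin m) ℚ} (hC : ∀ i j, 0 ≤ C i j)
    {β : Fin r → Fin s → ℝ} (hβ : ∀ k, β k ∈ CPset C) {c : Fin s → ℝ} {d : Fin r → ℝ}
    (hc : ∀ i, 0 ≤ c i) (hd : ∀ k, 0 ≤ d k) :
    (c + ∑ k, d k • β k, ∑ k, d k) ∈ SCset C := by
  refine ⟨fun i => ?_, ?_, fun j => ?_⟩
  · simp only [Pi.add_apply, Finset.sum_apply, Pi.smul_apply, smul_eq_mul]
    exact add_nonneg (hc i) (Finset.sum_nonneg fun k _ => mul_nonneg (hd k) ((hβ k).1 i))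
  · exact Finset.sum_nonneg (s := Finset.univ) fun k _ => hd k
  · rw [← colForm_apply, map_add, map_sum]
    have hc' : 0 ≤ colForm C j c := by
      rw [colForm_apply]
      exact Finset.sum_nonneg fun i _ => mul_nonneg (hc i) (by exact_mod_cast hC i j)
    calc ∑ k, d k ≤ ∑ k, colForm C j (d k • β k) := Finset.sum_le_sum fun k _ => by
          rw [map_smul, smul_eq_mul]
          exact le_mul_of_one_le_right (hd k) ((hβ k).2 j)
      _ ≤ _ := le_add_of_nonneg_left hc'

end CoveringPolyhedron

theorem stmt10_general {s m r : ℕ} (C : Matrix (Fin s) (Fin m) ℚ)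
    (hC : ∀ i j, 0 ≤ C i j)
    (β : Fin r → Fin s → ℝ)
    (hvert : Set.extremePoints ℝ (CPset C) = Set.range β) :
    SCset C = {x | ∃ (c : Fin s → ℝ) (d : Fin r → ℝ),
      (∀ i, 0 ≤ c i) ∧ (∀ j, 0 ≤ d j) ∧
      x.1 = c + ∑ j, d j • β j ∧ x.2 = ∑ j, d j} := by
  have hβ : ∀ k, β k ∈ CPset C := fun k => extremePoints_subset (hvert ▸ Set.mem_range_self k)
  ext ⟨y, t⟩
  refine ⟨fun hx => ?_, ?_⟩
  · obtain rfl | ht := hx.2.1.eq_or_lt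
    · exact ⟨y, 0, hx.1, fun _ => le_rfl, by simp, by simp⟩
    obtain ⟨c, w, hc, hw, hcw⟩ :=
      exists_nonneg_add_stdSimplex_combination_of_mem_CPset hvert
        (inv_smul_mem_CPset_of_mem_SCset hx ht)
    refine ⟨t • c, t • w, fun i => mul_nonneg ht.le (hc i), fun k => mul_nonneg ht.le (hw.1 k),
      ?_, ?_⟩
    · calc y = t • (t⁻¹ • y) := (smul_inv_smul₀ ht.ne' y).symm
        _ = _ := by
          simp only [hcw, smul_add, Finset.smul_sum, smul_smul, Pi.smul_apply, smul_eq_mul]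
    · simp only [Pi.smul_apply, smul_eq_mul, ← Finset.mul_sum, hw.2, mul_one]
  · rintro ⟨c, d, hc, hd, rfl, rfl⟩
    exact add_sum_smul_mem_SCset hC hβ hc hd

/-- If `β_1,...,β_r` are the vertices of `Q(C)`, then the Simis cone equals the cone
generated by `e_1,...,e_s,(β_1,1),...,(β_r,1)`. -/
theorem stmt10 {s m r : ℕ} (C : Matrix (Fin s) (Fin m) ℚ)
    (hC : ∀ i j, 0 ≤ C i j) (hcol : ∀ j, ∃ i, C i j ≠ 0)
    (β : Fin r → Fin s → ℝ)
    (hvert : Set.extremePoints ℝ (CPset C) = Set.range β) :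
    SCset C = {x | ∃ (c : Fin s → ℝ) (d : Fin r → ℝ),
      (∀ i, 0 ≤ c i) ∧ (∀ j, 0 ≤ d j) ∧
      x.1 = c + ∑ j, d j • β j ∧ x.2 = ∑ j, d j} :=
  stmt10_general C hC β hvert
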